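/- Let $\mu$ be a Borel measure on $\mathbb{R}^n$, $q \in (1, 2]$, and let $\theta_t$ be operators such that $(x,t) \mapsto \theta_t 1(x)$ is measurable. Suppose $\mathrm{Car} := \sup_{Q_0} \left[ \mu(9 Q_0)^{-1} \int_{Q_0} ( \int_0^{\ell(Q_0)} |\theta_t 1(x)|^2 \frac{dt}{t} )^{q/2} d\mu(x) \right]^{1/q} < \infty$, the supremum over all cubes $Q_0$. Fix a dyadic grid $\mathcal{D}$, an integer $r$ with $2^{r(1-\gamma)} \ge 10$, and for each $S \in \mathcal{D}$ set $A_S(x)^2 = \sum_{R \in \mathcal{D}_{good}, R^{(r)} = S} 1_R(x) \int_{\ell(R)/2}^{\ell(R)} |\theta_t 1(x)|^2 \frac{dt}{t}$, where every good cube $R$ with $R^{(r)} = S \subset Q$ satisfies $d(R, Q^c) \ge 9 \ell(R)$. Then for every $Q \in \mathcal{D}$: $\int_Q \left[ \sum_{S \subset Q} A_S(x)^2 \right]^{q/2} d\mu(x) \le C \, \mathrm{Car}^q \, \mu(Q)$. -/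

import Mathlib

open MeasureTheory ENNReal

/-- The axis-parallel cube with center `c` and side length `ℓ`. -/
def cube {n : ℕ} (c : Fin n → ℝ) (ℓ : ℝ) : Set (Fin n → ℝ) :=
  {y | ∀ i, |y i - c i| ≤ ℓ / 2}

/-- The standard dyadic cube `2^k(l + [0,1)^n)`; its side length is `2^k`. -/
def dCube {n : ℕ} (Q : ℤ × (Fin n → ℤ)) : Set (Fin n → ℝ) :=
  {x | ∀ i, (2 : ℝ) ^ Q.1 * Q.2 i ≤ x i ∧ x i < (2 : ℝ) ^ Q.1 * (Q.2 i + 1)}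

/-- Distance between two sets. -/
noncomputable def setDist {E : Type*} [PseudoMetricSpace E] (A B : Set E) : ℝ :=
  sInf {d | ∃ a ∈ A, ∃ b ∈ B, d = dist a b}

/-- The dyadic parent of a dyadic cube index. -/
def dParent {n : ℕ} (Q : ℤ × (Fin n → ℤ)) : ℤ × (Fin n → ℤ) :=
  (Q.1 + 1, fun i => Int.fdiv (Q.2 i) 2)


open Metric Set

/-!
Write `d(x) = dist(x, Qᶜ)`. A good cube `R ∋ x` with `R^{(r)} ⊆ Q` has `9ℓ(R) ≤ d(x)`, and at a
fixed `x` it is determined by its side length; so the inner sum at `x` is at most the sum, over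
the dyadic scales `9·2^k ≤ d(x)`, of `∫_{2^{k-1}}^{2^k} |θ_t 1(x)|² dt/t`.

Cover `{d > 0}` by Whitney cells: the points of a dyadic cube `P` of side `2^k` where
`8·2^k ≤ d < 16·2^k`. On such a cell only scales `≤ k` occur, so the Carleson condition on the
cube circumscribing `P` bounds the integral over the cell by `Car^q μ(9P)`. The boxes `9P` of
nonempty cells lie in `Q` and overlap at most `4·10ⁿ` times, since a point `y` of such a box has
`3·2^k ≤ d(y) < 21·2^k`.
-/

section Dyadic

variable {n : ℕ}

lemma measurableSet_dCube (R : ℤ × (Fin n → ℤ)) : MeasurableSet (dCube R) := by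
  simp only [dCube, ofPred_forall]
  exact .iInter fun i => measurableSet_Ico.preimage (measurable_pi_apply i)

lemma measurableSet_cube (c : Fin n → ℝ) (ℓ : ℝ) : MeasurableSet (cube c ℓ) := by
  simp only [cube, ofPred_forall]
  exact .iInter fun i =>
    measurableSet_le ((measurable_pi_apply i).sub measurable_const).abs measurable_const

lemma floor_eq_of_mem_dCube {R : ℤ × (Fin n → ℤ)} {x : Fin n → ℝ} (hx : x ∈ dCube R)
    (i : Fin n) : ⌊x i / (2 : ℝ) ^ R.1⌋ = R.2 i := by
  have hk : (0 : ℝ) < 2 ^ R.1 := by positivity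
  obtain ⟨h₁, h₂⟩ := hx i
  rw [Int.floor_eq_iff, le_div_iff₀ hk, div_lt_iff₀ hk]
  constructor <;> linarith

lemma eq_of_mem_dCube {R R' : ℤ × (Fin n → ℤ)} {x : Fin n → ℝ} (hx : x ∈ dCube R)
    (hx' : x ∈ dCube R') (hk : R.1 = R'.1) : R = R' :=
  Prod.ext hk <| funext fun i => by
    rw [← floor_eq_of_mem_dCube hx, ← floor_eq_of_mem_dCube hx', hk]

lemma mem_dCube_floor (k : ℤ) (x : Fin n → ℝ) :
    x ∈ dCube (k, fun i => ⌊x i / (2 : ℝ) ^ k⌋) := by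
  intro i
  have hk : (0 : ℝ) < 2 ^ k := by positivity
  have h₁ := Int.floor_le (x i / 2 ^ k)
  have h₂ := Int.lt_floor_add_one (x i / 2 ^ k)
  rw [le_div_iff₀ hk] at h₁
  rw [div_lt_iff₀ hk] at h₂
  constructor <;> linarith

noncomputable def dCenter (R : ℤ × (Fin n → ℤ)) : Fin n → ℝ :=
  fun i => (2 : ℝ) ^ R.1 * (R.2 i + 1 / 2)

lemma dCube_subset_cube (R : ℤ × (Fin n → ℤ)) : dCube R ⊆ cube (dCenter R) (2 ^ R.1) := by
  intro x hx i
  obtain ⟨h₁, h₂⟩ := hx i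
  rw [dCenter, abs_le]
  constructor <;> linarith

lemma dist_le_of_mem_cube {c x y : Fin n → ℝ} {ℓ ℓ' : ℝ} (hℓ : 0 ≤ ℓ) (hℓ' : 0 ≤ ℓ')
    (hx : x ∈ cube c ℓ) (hy : y ∈ cube c ℓ') : dist y x ≤ (ℓ + ℓ') / 2 := by
  refine (dist_pi_le_iff (by positivity)).2 fun i => ?_
  rw [Real.dist_eq]
  calc |y i - x i| ≤ |y i - c i| + |c i - x i| := abs_sub_le _ _ _
    _ ≤ (ℓ + ℓ') / 2 := by rw [abs_sub_comm (c i)]; linarith [hx i, hy i]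

end Dyadic

lemma setDist_le_infDist {E : Type*} [PseudoMetricSpace E] {A B : Set E} {x : E} (hx : x ∈ A) :
    setDist A B ≤ infDist x B := by
  rcases B.eq_empty_or_nonempty with rfl | hB
  · simp [setDist]
  refine (le_infDist hB).2 fun b hb => csInf_le ⟨0, ?_⟩ ⟨x, hx, b, hb, rfl⟩
  rintro _ ⟨a, -, b, -, rfl⟩
  exact dist_nonneg

lemma tsum_setLIntegral_Ioc_half_zpow_le (g : ℝ → ℝ≥0∞) (m : ℤ) :
    ∑' k : Iic m, ∫⁻ t in Ioc ((2 : ℝ) ^ (k : ℤ) / 2) (2 ^ (k : ℤ)), g t ≤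
      ∫⁻ t in Ioc 0 ((2 : ℝ) ^ m), g t := by
  have hdisj : Pairwise (Function.onFun Disjoint fun k : ℤ => Ioc ((2 : ℝ) ^ k / 2) (2 ^ k)) :=
    (pairwise_disjoint_on _).2 fun i j hij => Ioc_disjoint_Ioc_of_le <| by
      rw [div_eq_mul_inv, ← zpow_sub_one₀ two_ne_zero]
      exact zpow_le_zpow_right₀ one_le_two (by omega)
  rw [← lintegral_biUnion (to_countable _) (fun _ _ => measurableSet_Ioc) (hdisj.set_pairwise _)]
  refine lintegral_mono_set (iUnion₂_subset fun k hk t ht => ⟨?_, ?_⟩)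
  · exact lt_trans (by positivity) ht.1
  · exact ht.2.trans (zpow_le_zpow_right₀ one_le_two hk)

section Whitney

variable {n : ℕ} {Ω : Set (Fin n → ℝ)}

def whitneyScales (Ω : Set (Fin n → ℝ)) (x : Fin n → ℝ) : Set ℤ :=
  {k | 9 * (2 : ℝ) ^ k ≤ infDist x Ωᶜ}

def whitneyCell (Ω : Set (Fin n → ℝ)) (R : ℤ × (Fin n → ℤ)) : Set (Fin n → ℝ) :=
  {x | 8 * (2 : ℝ) ^ R.1 ≤ infDist x Ωᶜ ∧ infDist x Ωᶜ < 16 * 2 ^ R.1} ∩ dCube R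

open Classical in
noncomputable def whitneyBox (Ω : Set (Fin n → ℝ)) (R : ℤ × (Fin n → ℤ)) : Set (Fin n → ℝ) :=
  if (whitneyCell Ω R).Nonempty then cube (dCenter R) (9 * 2 ^ R.1) else ∅

lemma measurableSet_whitneyCell (R : ℤ × (Fin n → ℤ)) : MeasurableSet (whitneyCell Ω R) := by
  have hD : Measurable fun x => infDist x Ωᶜ := (continuous_infDist_pt _).measurable
  exact ((measurableSet_le measurable_const hD).inter (measurableSet_lt hD measurable_const)).inter
    (measurableSet_dCube R)

lemma measurableSet_whitneyBox (R : ℤ × (Fin n → ℤ)) : MeasurableSet (whitneyBox Ω R) := by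
  unfold whitneyBox
  split_ifs
  exacts [measurableSet_cube _ _, .empty]

lemma whitneyScales_subset_Iic {R : ℤ × (Fin n → ℤ)} {x : Fin n → ℝ}
    (hx : x ∈ whitneyCell Ω R) : whitneyScales Ω x ⊆ Iic R.1 := by
  intro k hk
  have hlt : (2 : ℝ) ^ k < 2 ^ (R.1 + 1) := by
    rw [zpow_add_one₀ two_ne_zero]
    linarith [hx.1.2, (by positivity : (0 : ℝ) < 2 ^ k), show 9 * (2 : ℝ) ^ k ≤ _ from hk]
  exact Int.lt_add_one_iff.1 ((zpow_lt_zpow_iff_right₀ _root_.one_lt_two).1 hlt)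

lemma whitneyScales_eq_empty {x : Fin n → ℝ} (hx : infDist x Ωᶜ ≤ 0) :
    whitneyScales Ω x = ∅ :=
  eq_empty_of_forall_notMem fun k hk =>
    (show 9 * (2 : ℝ) ^ k ≤ _ from hk).not_gt (hx.trans_lt (by positivity))

lemma exists_mem_whitneyCell {x : Fin n → ℝ} (hx : 0 < infDist x Ωᶜ) :
    ∃ R, x ∈ whitneyCell Ω R := by
  obtain ⟨j, hj, hj'⟩ := exists_mem_Ico_zpow hx _root_.one_lt_two
  have h8 : 8 * (2 : ℝ) ^ (j - 3) = 2 ^ j := by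
    rw [zpow_sub₀ two_ne_zero]; norm_num; ring
  refine ⟨(j - 3, fun i => ⌊x i / (2 : ℝ) ^ (j - 3)⌋), ⟨?_, ?_⟩, mem_dCube_floor _ x⟩
  · simpa [h8] using hj
  · rw [zpow_add_one₀ two_ne_zero] at hj'
    simp only
    linarith

lemma infDist_bounds_of_mem_whitneyBox {R : ℤ × (Fin n → ℤ)} {y : Fin n → ℝ}
    (hy : y ∈ whitneyBox Ω R) :
    y ∈ cube (dCenter R) (9 * 2 ^ R.1) ∧
      3 * (2 : ℝ) ^ R.1 ≤ infDist y Ωᶜ ∧ infDist y Ωᶜ < 21 * 2 ^ R.1 := by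
  unfold whitneyBox at hy
  split_ifs at hy with hne
  · obtain ⟨x, ⟨hx₁, hx₂⟩, hx⟩ := hne
    have hk : (0 : ℝ) ≤ 2 ^ R.1 := by positivity
    have hxy : dist y x ≤ 5 * 2 ^ R.1 := by
      have := dist_le_of_mem_cube hk (by positivity) (dCube_subset_cube R hx) hy
      linarith
    have h₁ := infDist_le_infDist_add_dist (s := Ωᶜ) (x := x) (y := y)
    have h₂ := infDist_le_infDist_add_dist (s := Ωᶜ) (x := y) (y := x)
    rw [dist_comm] at h₁
    exact ⟨hy, by linarith, by linarith⟩
  · exact absurd hy (notMem_empty y)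

lemma whitneyBox_subset (R : ℤ × (Fin n → ℤ)) : whitneyBox Ω R ⊆ Ω := fun y hy => by
  by_contra hyΩ
  have hlow := (infDist_bounds_of_mem_whitneyBox hy).2.1
  rw [infDist_zero_of_mem (mem_compl hyΩ)] at hlow
  exact hlow.not_gt (by positivity)

lemma mem_Ico_of_three_mul_zpow_le {d : ℝ} {a k : ℤ} (ha : (2 : ℝ) ^ a ≤ d)
    (ha' : d < 2 ^ (a + 1)) (hk : 3 * (2 : ℝ) ^ k ≤ d) (hk' : d < 21 * 2 ^ k) :
    k ∈ Finset.Ico (a - 4) a := by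
  have hpos : (0 : ℝ) < 2 ^ k := by positivity
  have h₁ : (2 : ℝ) ^ (k + 1) < 2 ^ (a + 1) := by
    rw [zpow_add_one₀ two_ne_zero]; linarith
  have h₂ : (2 : ℝ) ^ a < 2 ^ (k + 5) := by
    rw [zpow_add₀ two_ne_zero]; norm_num; linarith
  rw [zpow_lt_zpow_iff_right₀ _root_.one_lt_two] at h₁ h₂
  rw [Finset.mem_Ico]
  omega

lemma mem_Icc_floor_of_abs_sub_le {ℓ y : ℝ} (hℓ : 0 < ℓ) {v : ℤ}
    (h : |y - ℓ * (v + 1 / 2)| ≤ 9 * ℓ / 2) :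
    v ∈ Finset.Icc (⌊y / ℓ⌋ - 5) (⌊y / ℓ⌋ + 4) := by
  have hu : |y / ℓ - (v + 1 / 2)| ≤ 9 / 2 := by
    rw [show y - ℓ * (v + 1 / 2) = ℓ * (y / ℓ - (v + 1 / 2)) by field_simp, abs_mul,
      abs_of_pos hℓ] at h
    exact le_of_mul_le_mul_left (by linarith) hℓ
  have h₁ := Int.floor_le (y / ℓ)
  have h₂ := Int.lt_floor_add_one (y / ℓ)
  obtain ⟨h₃, h₄⟩ := abs_le.1 hu
  have h₅ : (⌊y / ℓ⌋ : ℝ) - 6 < v := by linarith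
  have h₆ : (v : ℝ) < ⌊y / ℓ⌋ + 5 := by linarith
  norm_cast at h₅ h₆
  rw [Finset.mem_Icc]
  omega

open Classical in
noncomputable def whitneyBoxCandidates (a : ℤ) (y : Fin n → ℝ) : Finset (ℤ × (Fin n → ℤ)) :=
  (Finset.Ico (a - 4) a).biUnion fun k =>
    (Fintype.piFinset fun i => Finset.Icc (⌊y i / (2 : ℝ) ^ k⌋ - 5) (⌊y i / 2 ^ k⌋ + 4)).image
      (Prod.mk k)

lemma card_whitneyBoxCandidates_le (a : ℤ) (y : Fin n → ℝ) :
    (whitneyBoxCandidates a y).card ≤ 4 * 10 ^ n := by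
  classical
  refine (Finset.card_biUnion_le_card_mul _ _ (10 ^ n) fun k _ => ?_).trans_eq ?_
  · refine Finset.card_image_le.trans_eq ?_
    have h10 (z : ℤ) : (z + 4 + 1 - (z - 5)).toNat = 10 := by omega
    simp [Int.card_Icc, h10]
  · simp

lemma mem_whitneyBoxCandidates {R : ℤ × (Fin n → ℤ)} {y : Fin n → ℝ} {a : ℤ}
    (hy : y ∈ whitneyBox Ω R) (ha : (2 : ℝ) ^ a ≤ infDist y Ωᶜ)
    (ha' : infDist y Ωᶜ < 2 ^ (a + 1)) : R ∈ whitneyBoxCandidates a y := by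
  classical
  obtain ⟨hcube, hlow, hup⟩ := infDist_bounds_of_mem_whitneyBox hy
  simp only [whitneyBoxCandidates, Finset.mem_biUnion, Finset.mem_image,
    Fintype.mem_piFinset]
  refine ⟨R.1, mem_Ico_of_three_mul_zpow_le ha ha' hlow hup, R.2,
    fun i => mem_Icc_floor_of_abs_sub_le (by positivity) ?_, rfl⟩
  convert hcube i using 2
  simp only [dCenter]

lemma tsum_indicator_whitneyBox_le (y : Fin n → ℝ) :
    ∑' R, (whitneyBox Ω R).indicator 1 y ≤ (4 * 10 ^ n : ℝ≥0∞) * Ω.indicator 1 y := by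
  by_cases hy : ∃ R, y ∈ whitneyBox Ω R
  swap
  · push Not at hy
    simp [indicator_of_notMem (hy _)]
  obtain ⟨R₀, hR₀⟩ := hy
  have hpos : 0 < infDist y Ωᶜ :=
    lt_of_lt_of_le (by positivity) (infDist_bounds_of_mem_whitneyBox hR₀).2.1
  obtain ⟨a, ha, ha'⟩ := exists_mem_Ico_zpow hpos _root_.one_lt_two
  rw [indicator_of_mem (whitneyBox_subset R₀ hR₀), Pi.one_apply, mul_one,
    tsum_eq_sum fun R hR => indicator_of_notMem (mt (mem_whitneyBoxCandidates · ha ha') hR) _]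
  calc ∑ R ∈ whitneyBoxCandidates a y, (whitneyBox Ω R).indicator (1 : (Fin n → ℝ) → ℝ≥0∞) y
      ≤ (whitneyBoxCandidates a y).card • 1 :=
        Finset.sum_le_card_nsmul _ _ _ fun R _ =>
          indicator_apply_le' (fun _ => le_rfl) fun _ => zero_le
    _ ≤ 4 * 10 ^ n := by
        rw [nsmul_one]
        exact_mod_cast card_whitneyBoxCandidates_le a y

lemma tsum_measure_whitneyBox_le (μ : Measure (Fin n → ℝ)) :
    ∑' R, μ (whitneyBox Ω R) ≤ 4 * 10 ^ n * μ Ω :=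
  calc ∑' R, μ (whitneyBox Ω R) = ∫⁻ y, ∑' R, (whitneyBox Ω R).indicator 1 y ∂μ := by
        rw [lintegral_tsum fun R =>
          (measurable_one.indicator (measurableSet_whitneyBox R)).aemeasurable]
        simp_rw [lintegral_indicator_one (measurableSet_whitneyBox _)]
    _ ≤ ∫⁻ y, 4 * 10 ^ n * Ω.indicator 1 y ∂μ := lintegral_mono tsum_indicator_whitneyBox_le
    _ ≤ 4 * 10 ^ n * μ Ω := by
        rw [lintegral_const_mul' _ _ (by finiteness)]
        gcongr
        exact lintegral_indicator_one_le Ω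

variable {μ : Measure (Fin n → ℝ)} {Φ : ℝ≥0∞ → ℝ≥0∞} {h : (Fin n → ℝ) → ℤ → ℝ≥0∞} {K : ℝ≥0∞}

lemma setLIntegral_whitneyCell_le (hΦ : Monotone Φ)
    (hCar : ∀ (c : Fin n → ℝ) (k : ℤ),
      ∫⁻ x in cube c (2 ^ k), Φ (∑' j : Iic k, h x j) ∂μ ≤ K * μ (cube c (9 * 2 ^ k)))
    (R : ℤ × (Fin n → ℤ)) :
    ∫⁻ x in whitneyCell Ω R, Φ (∑' k : whitneyScales Ω x, h x k) ∂μ ≤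
      K * μ (whitneyBox Ω R) := by
  rcases (whitneyCell Ω R).eq_empty_or_nonempty with hempty | hne
  · simp [hempty]
  rw [whitneyBox, if_pos hne]
  calc ∫⁻ x in whitneyCell Ω R, Φ (∑' k : whitneyScales Ω x, h x k) ∂μ
      ≤ ∫⁻ x in whitneyCell Ω R, Φ (∑' k : Iic R.1, h x k) ∂μ :=
        setLIntegral_mono' (measurableSet_whitneyCell R) fun x hx =>
          hΦ (ENNReal.tsum_mono_subtype _ (whitneyScales_subset_Iic hx))
    _ ≤ ∫⁻ x in cube (dCenter R) (2 ^ R.1), Φ (∑' k : Iic R.1, h x k) ∂μ :=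
        lintegral_mono_set (inter_subset_right.trans (dCube_subset_cube R))
    _ ≤ K * μ (cube (dCenter R) (9 * 2 ^ R.1)) := hCar _ _

theorem lintegral_tsum_whitneyScales_le (hΦ : Monotone Φ) (hΦ0 : Φ 0 = 0)
    (hCar : ∀ (c : Fin n → ℝ) (k : ℤ),
      ∫⁻ x in cube c (2 ^ k), Φ (∑' j : Iic k, h x j) ∂μ ≤ K * μ (cube c (9 * 2 ^ k)))
    (Ω : Set (Fin n → ℝ)) :
    ∫⁻ x, Φ (∑' k : whitneyScales Ω x, h x k) ∂μ ≤ 4 * 10 ^ n * K * μ Ω := by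
  set f := fun x => Φ (∑' k : whitneyScales Ω x, h x k)
  set Z := {x | infDist x Ωᶜ ≤ 0}
  have hcover : univ ⊆ (⋃ R, whitneyCell Ω R) ∪ Z := fun x _ => by
    rcases le_or_gt (infDist x Ωᶜ) 0 with hx | hx
    exacts [Or.inr hx, Or.inl (mem_iUnion.2 (exists_mem_whitneyCell hx))]
  have hZ : ∫⁻ x in Z, f x ∂μ = 0 := by
    rw [← lintegral_zero (μ := μ.restrict Z)]
    refine setLIntegral_congr_fun
      (measurableSet_le (continuous_infDist_pt _).measurable measurable_const) fun x hx => ?_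
    simp [f, whitneyScales_eq_empty hx, hΦ0]
  calc ∫⁻ x, f x ∂μ
      ≤ ∫⁻ x in (⋃ R, whitneyCell Ω R) ∪ Z, f x ∂μ := by
        rw [← setLIntegral_univ]; exact lintegral_mono_set hcover
    _ ≤ ∫⁻ x in ⋃ R, whitneyCell Ω R, f x ∂μ := by
        simpa [hZ] using lintegral_union_le (μ := μ) f (⋃ R, whitneyCell Ω R) Z
    _ ≤ ∑' R, ∫⁻ x in whitneyCell Ω R, f x ∂μ := lintegral_iUnion_le _ _
    _ ≤ ∑' R, K * μ (whitneyBox Ω R) :=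
        ENNReal.tsum_le_tsum (setLIntegral_whitneyCell_le hΦ hCar)
    _ ≤ 4 * 10 ^ n * K * μ Ω := by
        rw [ENNReal.tsum_mul_left, mul_comm _ K, mul_assoc]
        gcongr
        exact tsum_measure_whitneyBox_le μ

end Whitney

lemma tsum_goodCube_le_tsum_whitneyScales {n : ℕ} {r : ℕ} {Good : ℤ × (Fin n → ℤ) → Prop}
    {Q : ℤ × (Fin n → ℤ)}
    (hGood : ∀ R, Good R → dCube (dParent^[r] R) ⊆ dCube Q →
      9 * (2 : ℝ) ^ R.1 ≤ setDist (dCube R) (dCube Q)ᶜ)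
    (I : (Fin n → ℝ) → ℤ → ℝ≥0∞) (x : Fin n → ℝ) :
    ∑' S : {S : ℤ × (Fin n → ℤ) // dCube S ⊆ dCube Q},
        ∑' R : {R : ℤ × (Fin n → ℤ) // Good R ∧ dParent^[r] R = S.1},
          (dCube R.1).indicator (fun y => I y R.1.1) x ≤
      ∑' k : whitneyScales (dCube Q) x, I x k := by
  set term : (Σ S : {S : ℤ × (Fin n → ℤ) // dCube S ⊆ dCube Q},
      {R : ℤ × (Fin n → ℤ) // Good R ∧ dParent^[r] R = S.1}) → ℝ≥0∞ :=
    fun p => (dCube p.2.1).indicator (fun y => I y p.2.1.1) x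
  have hsupp : ∀ p, term p ≠ 0 → x ∈ dCube p.2.1 ∧ p.2.1.1 ∈ whitneyScales (dCube Q) x := by
    intro p hp
    have hx : x ∈ dCube p.2.1 := by
      by_contra hx
      exact hp (indicator_of_notMem hx _)
    refine ⟨hx, (hGood _ p.2.2.1 ?_).trans (setDist_le_infDist hx)⟩
    rw [p.2.2.2]
    exact p.1.2
  let scale : Function.support term → whitneyScales (dCube Q) x :=
    fun p => ⟨p.1.2.1.1, (hsupp p.1 p.2).2⟩
  have hscale : Function.Injective scale := by
    rintro ⟨⟨⟨S, hS⟩, ⟨R, hR⟩⟩, hp⟩ ⟨⟨⟨S', hS'⟩, ⟨R', hR'⟩⟩, hp'⟩ hk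
    obtain rfl : R = R' :=
      eq_of_mem_dCube (hsupp _ hp).1 (hsupp _ hp').1 (congrArg Subtype.val hk)
    obtain rfl : S = S' := hR.2.symm.trans hR'.2
    rfl
  calc _ = ∑' p, term p := (ENNReal.tsum_sigma' _).symm
    _ = ∑' p : Function.support term, term p := (tsum_subtype_support _).symm
    _ = ∑' p : Function.support term, I x (scale p) :=
        tsum_congr fun p => indicator_of_mem (hsupp p.1 p.2).1 _
    _ ≤ ∑' k : whitneyScales (dCube Q) x, I x k :=
        ENNReal.tsum_comp_le_tsum_of_injective hscale _

theorem stmt_12_general (n : ℕ) (q : ℝ) (r : ℕ) (hq1 : 1 < q) :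
    ∃ C : ENNReal, C ≠ ⊤ ∧
      ∀ (μ : Measure (Fin n → ℝ)) (θ : ℝ → (Fin n → ℝ) → ℝ),
        Measurable (Function.uncurry θ) →
        ∀ (Good : ℤ × (Fin n → ℤ) → Prop) (Car : ENNReal),
          (∀ (c : Fin n → ℝ) (ℓ : ℝ), 0 < ℓ →
            ∫⁻ x in cube c ℓ,
              (∫⁻ t in Set.Ioc (0 : ℝ) ℓ,
                ENNReal.ofReal ((θ t x) ^ 2 / t)) ^ (q / 2) ∂μ ≤
              Car ^ q * μ (cube c (9 * ℓ))) →
          (∀ R, Good R → ∀ Q : ℤ × (Fin n → ℤ),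
            dCube (dParent^[r] R) ⊆ dCube Q →
            9 * (2 : ℝ) ^ R.1 ≤ setDist (dCube R) (dCube Q)ᶜ) →
          ∀ Q : ℤ × (Fin n → ℤ),
            ∫⁻ x in dCube Q,
              (∑' S : {S : ℤ × (Fin n → ℤ) // dCube S ⊆ dCube Q},
                ∑' R : {R : ℤ × (Fin n → ℤ) // Good R ∧ dParent^[r] R = S.1},
                  (dCube R.1).indicator
                    (fun y => ∫⁻ t in Set.Ioc ((2 : ℝ) ^ R.1.1 / 2) ((2 : ℝ) ^ R.1.1),
                      ENNReal.ofReal ((θ t y) ^ 2 / t)) x) ^ (q / 2) ∂μ ≤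
              C * Car ^ q * μ (dCube Q) := by
  refine ⟨4 * 10 ^ n, by finiteness, fun μ θ _ Good Car hCar hGood Q => ?_⟩
  set I : (Fin n → ℝ) → ℤ → ℝ≥0∞ := fun y k =>
    ∫⁻ t in Ioc ((2 : ℝ) ^ k / 2) (2 ^ k), ENNReal.ofReal ((θ t y) ^ 2 / t)
  have hΦ : Monotone fun s : ℝ≥0∞ => s ^ (q / 2) := ENNReal.monotone_rpow_of_nonneg (by linarith)
  have hCarI (c : Fin n → ℝ) (k : ℤ) :
      ∫⁻ x in cube c (2 ^ k), (∑' j : Iic k, I x j) ^ (q / 2) ∂μ ≤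
        Car ^ q * μ (cube c (9 * 2 ^ k)) :=
    (lintegral_mono fun x => hΦ (tsum_setLIntegral_Ioc_half_zpow_le _ k)).trans
      (hCar c _ (by positivity))
  calc _ ≤ ∫⁻ x in dCube Q, (∑' k : whitneyScales (dCube Q) x, I x k) ^ (q / 2) ∂μ :=
        lintegral_mono fun x => hΦ (tsum_goodCube_le_tsum_whitneyScales (hGood · · Q) I x)
    _ ≤ ∫⁻ x, (∑' k : whitneyScales (dCube Q) x, I x k) ^ (q / 2) ∂μ :=
        setLIntegral_le_lintegral _ _
    _ ≤ 4 * 10 ^ n * Car ^ q * μ (dCube Q) :=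
        lintegral_tsum_whitneyScales_le hΦ (ENNReal.zero_rpow_of_pos (by linarith)) hCarI _

/-- Carleson estimate for the paraproduct coefficients in the `T1` theorem: if the
global testing constant `Car` (with dilation `9Q₀`) is finite, and every good cube `R`
with `R^{(r)} = S ⊆ Q` satisfies `d(R, Qᶜ) ≥ 9ℓ(R)`, then with
`A_S(x)² = ∑_{R good, R^{(r)} = S} 1_R(x) ∫_{ℓ(R)/2}^{ℓ(R)} |θ_t1(x)|² dt/t`
one has `∫_Q (∑_{S ⊆ Q} A_S²)^{q/2} dμ ≤ C Car^q μ(Q)` for every dyadic `Q`. -/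
theorem stmt_12 (n : ℕ) (q γ : ℝ) (r : ℕ) (hq1 : 1 < q) (hq2 : q ≤ 2)
    (hγ0 : 0 < γ) (hγ1 : γ < 1) (hr : (10 : ℝ) ≤ (2 : ℝ) ^ ((r : ℝ) * (1 - γ))) :
    ∃ C : ENNReal, C ≠ ⊤ ∧
      ∀ (μ : Measure (Fin n → ℝ)) (θ : ℝ → (Fin n → ℝ) → ℝ),
        Measurable (Function.uncurry θ) →
        ∀ (Good : ℤ × (Fin n → ℤ) → Prop) (Car : ENNReal),
          (∀ (c : Fin n → ℝ) (ℓ : ℝ), 0 < ℓ →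
            ∫⁻ x in cube c ℓ,
              (∫⁻ t in Set.Ioc (0 : ℝ) ℓ,
                ENNReal.ofReal ((θ t x) ^ 2 / t)) ^ (q / 2) ∂μ ≤
              Car ^ q * μ (cube c (9 * ℓ))) →
          (∀ R, Good R → ∀ Q : ℤ × (Fin n → ℤ),
            dCube (dParent^[r] R) ⊆ dCube Q →
            9 * (2 : ℝ) ^ R.1 ≤ setDist (dCube R) (dCube Q)ᶜ) →
          ∀ Q : ℤ × (Fin n → ℤ),
            ∫⁻ x in dCube Q,
              (∑' S : {S : ℤ × (Fin n → ℤ) // dCube S ⊆ dCube Q},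
                ∑' R : {R : ℤ × (Fin n → ℤ) // Good R ∧ dParent^[r] R = S.1},
                  (dCube R.1).indicator
                    (fun y => ∫⁻ t in Set.Ioc ((2 : ℝ) ^ R.1.1 / 2) ((2 : ℝ) ^ R.1.1),
                      ENNReal.ofReal ((θ t y) ^ 2 / t)) x) ^ (q / 2) ∂μ ≤
              C * Car ^ q * μ (dCube Q) :=
  stmt_12_general n q r hq1
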